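/- Let n ≥ 3 be odd and let Ā be the (n+1)/2 × (n+1)/2 symmetric real matrix with Ā(1,1) = 0, Ā(1,j) = Ā(j,1) = √2 for j ≥ 2, Ā(j,j) = 1 for j ≥ 2, and Ā(i,j) = 2 for distinct i,j ≥ 2. Then det(λI - Ā) = (λ+1)^((n-3)/2)·(λ² - (n-2)λ - (n-1)). -/
import Mathlib

open Matrix Polynomial

/-- The quotient matrix `Ā` of size `(n+1)/2`: entry `(0,0)` is `0`, entries `(0,j)` and
`(j,0)` for `j ≥ 1` are `√2`, diagonal entries `(j,j)` for `j ≥ 1` are `1`, and all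
other off-diagonal entries are `2`. -/
noncomputable def Abar (n : ℕ) : Matrix (Fin ((n + 1) / 2)) (Fin ((n + 1) / 2)) ℝ :=
  Matrix.of fun i j =>
    if i.val = 0 ∧ j.val = 0 then 0
    else if i.val = 0 ∨ j.val = 0 then Real.sqrt 2
    else if i = j then 1 else 2

namespace AbarAux

lemma charAbar (n : ℕ) (i j : Fin ((n + 1) / 2)) :
    charmatrix (Abar n) i j =
      if i = j then (if i.val = 0 then X else X - 1)
      else (if i.val = 0 ∨ j.val = 0 then -C (Real.sqrt 2) else -2) := by
  rcases eq_or_ne i j with rfl | h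
  · rw [charmatrix_apply_eq]
    by_cases h0 : i.val = 0 <;> simp [Abar, h0]
  · rw [charmatrix_apply_ne _ _ _ h, if_neg h]
    by_cases h0 : i.val = 0 <;> by_cases h1 : j.val = 0
    · exact absurd (Fin.ext (h0.trans h1.symm)) h
    · simp [Abar, h0, h1]
    · simp [Abar, h0, h1]
    · have : ¬ (i = j) := h
      simp [Abar, h0, h1, this, map_ofNat]

end AbarAux

noncomputable def blkA : Matrix (Fin 2) (Fin 2) ℝ[X] :=
  !![X, -C (Real.sqrt 2); -C (Real.sqrt 2), X - 1]

noncomputable def blkB (k : ℕ) : Matrix (Fin 2) (Fin k) ℝ[X] :=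
  Matrix.of fun a _ => if a = 0 then -C (Real.sqrt 2) else -2

noncomputable def blkC (k : ℕ) : Matrix (Fin k) (Fin 2) ℝ[X] :=
  Matrix.of fun _ a => if a = 0 then -C (Real.sqrt 2) else -2

noncomputable def blkD (k : ℕ) : Matrix (Fin k) (Fin k) ℝ[X] :=
  Matrix.of fun i j => if i = j then X - 1 else -2

def eqv (k : ℕ) : Fin 2 ⊕ Fin k ≃ Fin ((2 * k + 3 + 1) / 2) :=
  finSumFinEquiv.trans (finCongr (by omega))

lemma eqv_inl (k : ℕ) (a : Fin 2) : ((eqv k) (Sum.inl a)).val = a.val := by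
  simp [eqv]

lemma eqv_inr (k : ℕ) (b : Fin k) : ((eqv k) (Sum.inr b)).val = 2 + b.val := by
  simp [eqv, Fin.natAdd]

open AbarAux in
lemma submatrix_eq (k : ℕ) :
    (charmatrix (Abar (2 * k + 3))).submatrix (eqv k) (eqv k) =
      fromBlocks blkA (blkB k) (blkC k) (blkD k) := by
  ext i j : 2
  rw [submatrix_apply, charAbar]
  simp only [Equiv.apply_eq_iff_eq]
  rcases i with a | b <;> rcases j with a' | b'
  · fin_cases a <;> fin_cases a' <;>
      simp [blkA, eqv_inl]
  · fin_cases a <;> simp [blkB, eqv_inl, eqv_inr]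
  · fin_cases a' <;> simp [blkC, eqv_inl, eqv_inr]
  · rcases eq_or_ne b b' with rfl | h
    · simp [blkD, eqv_inr]
    · simp [blkD, eqv_inr, h]

noncomputable def Pm (k : ℕ) : Matrix (Fin k) (Fin 2) ℝ[X] :=
  Matrix.of fun _ a => if a = 0 then 0 else -1

noncomputable def Qm (k : ℕ) : Matrix (Fin k) (Fin 2) ℝ[X] :=
  Matrix.of fun _ a => if a = 0 then 0 else 1

noncomputable def blkA' (k : ℕ) : Matrix (Fin 2) (Fin 2) ℝ[X] :=
  !![X, -((k : ℝ[X]) + 1) * C (Real.sqrt 2); -C (Real.sqrt 2), X - (2 * (k : ℝ[X]) + 1)]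

noncomputable def E0 (k : ℕ) : Matrix (Fin 2 ⊕ Fin k) (Fin 2 ⊕ Fin k) ℝ[X] :=
  fromBlocks 1 0 (Pm k) 1

noncomputable def F0 (k : ℕ) : Matrix (Fin 2 ⊕ Fin k) (Fin 2 ⊕ Fin k) ℝ[X] :=
  fromBlocks 1 0 (Qm k) 1

lemma prod_eq (k : ℕ) :
    E0 k * fromBlocks blkA (blkB k) (blkC k) (blkD k) * F0 k =
      fromBlocks (blkA' k) (blkB k) 0 ((X + 1 : ℝ[X]) • (1 : Matrix (Fin k) (Fin k) ℝ[X])) := by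
  rw [E0, F0, fromBlocks_multiply, fromBlocks_multiply]
  simp only [Matrix.one_mul, Matrix.mul_one, Matrix.zero_mul, Matrix.mul_zero,
    add_zero, zero_add]
  refine Matrix.ext fun i j => ?_
  rcases i with a | b <;> rcases j with a' | b'
  · show (blkA + blkB k * Qm k) a a' = blkA' k a a'
    fin_cases a <;> fin_cases a' <;>
      simp [blkA, blkB, blkA', Qm, Matrix.mul_apply, Matrix.add_apply, Finset.sum_const,
        Finset.card_univ, nsmul_eq_mul] <;>
      ring
  · show blkB k a b' = blkB k a b'
    rfl
  · show (Pm k * blkA + blkC k + (Pm k * blkB k + blkD k) * Qm k) b a' = 0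
    have key : ∀ x : Fin k, (2 + if b = x then X - 1 else -2 : ℝ[X])
        = if b = x then X + 1 else 0 := by
      intro x; split <;> ring
    fin_cases a'
    · simp [blkA, blkB, blkC, blkD, Pm, Qm, Matrix.mul_apply, Matrix.add_apply,
        Fin.sum_univ_two]
    · simp only [blkA, blkB, blkC, blkD, Pm, Qm, Matrix.mul_apply, Matrix.add_apply,
        Matrix.of_apply, Fin.sum_univ_two]
      simp [key, Finset.sum_ite_eq]
      ring
  · show (Pm k * blkB k + blkD k) b b' = ((X + 1 : ℝ[X]) • (1 : Matrix (Fin k) (Fin k) ℝ[X])) b b'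
    rcases eq_or_ne b b' with rfl | h
    · simp [blkB, blkD, Pm, Matrix.mul_apply, Matrix.add_apply, Fin.sum_univ_two,
        Matrix.smul_apply, Matrix.one_apply]
      ring
    · simp [blkB, blkD, Pm, Matrix.mul_apply, Matrix.add_apply, Fin.sum_univ_two, h,
        Matrix.smul_apply, Matrix.one_apply]

lemma det_E0 (k : ℕ) : (E0 k).det = 1 := by
  rw [E0, det_fromBlocks_zero₁₂]; simp

lemma det_F0 (k : ℕ) : (F0 k).det = 1 := by
  rw [F0, det_fromBlocks_zero₁₂]; simp



open AbarAux in
/-- For odd `n ≥ 3`, `det(λI - Ā) = (λ+1)^((n-3)/2) (λ² - (n-2)λ - (n-1))`. -/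
theorem charpoly_Abar (n : ℕ) (hn : 3 ≤ n) (hodd : Odd n) :
    (Abar n).charpoly =
      (X + 1) ^ ((n - 3) / 2) *
        (X ^ 2 - C ((n : ℝ) - 2) * X - C ((n : ℝ) - 1)) := by
  obtain ⟨j, hj⟩ := hodd
  obtain ⟨k, rfl⟩ : ∃ k, n = 2 * k + 3 := ⟨j - 1, by omega⟩
  have h1 : (2 * k + 3 - 3) / 2 = k := by omega
  rw [h1, Matrix.charpoly, ← Matrix.det_submatrix_equiv_self (eqv k), submatrix_eq]
  have hdet := congrArg Matrix.det (prod_eq k)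
  rw [Matrix.det_mul, Matrix.det_mul, det_E0, det_F0, one_mul, mul_one] at hdet
  rw [hdet, det_fromBlocks_zero₂₁, Matrix.det_smul, Matrix.det_one, mul_one,
    blkA', Matrix.det_fin_two_of, mul_comm]
  congr 1
  · simp
  have hs : C (Real.sqrt 2) ^ 2 = 2 := by
    rw [← map_pow, Real.sq_sqrt (by norm_num : (0:ℝ) ≤ 2), map_ofNat]
  have hc : ((2 * k + 3 : ℕ) : ℝ) = 2 * (k : ℝ) + 3 := by push_cast; ring
  rw [hc]
  simp only [map_sub, map_add, _root_.map_mul, map_ofNat, _root_.map_one, map_natCast]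
  ring_nf
  rw [hs]
  ring
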